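/- arXiv:1603.06850 — 4 statements merged into one kernel-verified Lean document; each statement's English description precedes it below -/
import Mathlib

section
/- A function g : ℕ → ℤ (modeling a counter value over time on a run of length N) that is monotone on each of r+1 pieces (alternating between nondecreasing and nonincreasing, i.e., making at most r reversals) visits at most (r+1) * (2n+1) distinct regions determined by n constants: formally, the number of indices i < N at which g crosses from one region to a different region is at most (r+1) * (2n+1). -/
/-- The region index of a value `v` with respect to the nondecreasing constants `c`:
region `0` is below `c 0`, region `1` is `{c 0}`, region `2` is strictly between
`c 0` and `c 1`, …, region `2n` is above `c (n-1)`. -/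
def reg (n : ℕ) (c : Fin n → ℕ) (v : ℤ) : Fin (2 * n + 1) :=
  ⟨(Finset.univ.filter (fun i : Fin n => ((c i : ℤ) < v))).card +
      (Finset.univ.filter (fun i : Fin n => ((c i : ℤ) ≤ v))).card, by
    have h1 := Finset.card_filter_le (Finset.univ : Finset (Fin n))
      (fun i : Fin n => ((c i : ℤ) < v))
    have h2 := Finset.card_filter_le (Finset.univ : Finset (Fin n))
      (fun i : Fin n => ((c i : ℤ) ≤ v))
    simp only [Finset.card_univ, Fintype.card_fin] at h1 h2
    omega⟩

/-!
On a monotone piece `i ↦ f (i + 1)` is strictly increasing along the indices where `f` changes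
value, and stays above the initial value, so a piece has fewer changes than there are values.
The region map is monotone, hence each of the `r + 1` monotone pieces of `g` changes region
fewer than `2n + 1` times, and every index below `N` lies in one of the pieces.
-/

open Finset

lemma monotone_reg (n : ℕ) (c : Fin n → ℕ) : Monotone (reg n c) := by
  intro v w hvw
  rw [Fin.le_iff_val_le_val]
  refine Nat.add_le_add (card_le_card (monotone_filter_right _ ?_))
    (card_le_card (monotone_filter_right _ ?_)) <;>
  exact fun i _ hi => by lia

section Changes

variable {α : Type*} [LinearOrder α] [Fintype α] {f : ℕ → α} {a b : ℕ}

lemma card_filter_ne_succ_lt_card_of_monotoneOn (hf : MonotoneOn f (Set.Icc a b)) :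
    #{i ∈ Ico a b | f i ≠ f (i + 1)} < Fintype.card α := by
  set S := {i ∈ Ico a b | f i ≠ f (i + 1)}
  have hmem : ∀ {i}, i ∈ S → a ≤ i ∧ i < b ∧ f i < f (i + 1) := fun {i} hi => by
    obtain ⟨hi, hne⟩ := mem_filter.1 hi
    obtain ⟨hai, hib⟩ := mem_Ico.1 hi
    exact ⟨hai, hib, lt_of_le_of_ne (hf ⟨hai, hib.le⟩ ⟨by lia, hib⟩ (by lia)) hne⟩
  have hstrict : StrictMonoOn (fun i => f (i + 1)) S := fun i hi j hj hij => by
    obtain ⟨hai, -, -⟩ := hmem hi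
    obtain ⟨-, hjb, hj⟩ := hmem hj
    exact (hf ⟨by lia, by lia⟩ ⟨by lia, hjb.le⟩ hij).trans_lt hj
  have hfresh : f a ∉ S.image (fun i => f (i + 1)) := by
    simp only [mem_image, not_exists, not_and]
    intro i hi
    obtain ⟨hai, hib, hi⟩ := hmem hi
    exact ((hf ⟨le_rfl, by lia⟩ ⟨hai, hib.le⟩ hai).trans_lt hi).ne'
  calc #S = #(S.image fun i => f (i + 1)) := (card_image_of_injOn hstrict.injOn).symm
    _ < #(insert (f a) (S.image fun i => f (i + 1))) := by
      rw [card_insert_of_notMem hfresh]; lia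
    _ ≤ Fintype.card α := card_le_univ _

lemma card_filter_ne_succ_lt_card_of_antitoneOn (hf : AntitoneOn f (Set.Icc a b)) :
    #{i ∈ Ico a b | f i ≠ f (i + 1)} < Fintype.card α :=
  card_filter_ne_succ_lt_card_of_monotoneOn (α := αᵒᵈ) hf.dual_right

end Changes

lemma exists_castSucc_le_and_lt_succ {α : Type*} [LinearOrder α] {k : ℕ} (b : Fin (k + 1) → α)
    {x : α} (h0 : b 0 ≤ x) (hlast : x < b (Fin.last k)) :
    ∃ j : Fin k, b j.castSucc ≤ x ∧ x < b j.succ := by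
  by_contra! h
  have hle : ∀ m, b m ≤ x := Fin.induction h0 fun j hj => h j hj
  exact (hle _).not_gt hlast

theorem stmt_4_general (n r N : ℕ) (c : Fin n → ℕ)
    (g : ℕ → ℤ)
    (hpieces : ∃ b : Fin (r + 2) → ℕ, b 0 = 0 ∧ b (Fin.last (r + 1)) = N ∧ Monotone b ∧
      ∀ j : Fin (r + 1),
        MonotoneOn g (Set.Icc (b j.castSucc) (b j.succ)) ∨
        AntitoneOn g (Set.Icc (b j.castSucc) (b j.succ))) :
    ((Finset.range N).filter
        (fun i => reg n c (g i) ≠ reg n c (g (i + 1)))).card ≤ (r + 1) * (2 * n + 1) := by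
  obtain ⟨b, hb0, hbN, -, hpiece⟩ := hpieces
  set changesOn := fun s : Finset ℕ => {i ∈ s | reg n c (g i) ≠ reg n c (g (i + 1))}
  have hcover : changesOn (range N) ⊆
      univ.biUnion fun j : Fin (r + 1) => changesOn (Ico (b j.castSucc) (b j.succ)) := by
    intro i hi
    obtain ⟨hiN, hchange⟩ := mem_filter.1 hi
    obtain ⟨j, hj⟩ := exists_castSucc_le_and_lt_succ b (hb0 ▸ Nat.zero_le i) (hbN ▸ mem_range.1 hiN)
    exact mem_biUnion.2 ⟨j, mem_univ j, mem_filter.2 ⟨mem_Ico.2 hj, hchange⟩⟩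
  have hpiece_card : ∀ j : Fin (r + 1), #(changesOn (Ico (b j.castSucc) (b j.succ))) ≤ 2 * n + 1 :=
    fun j => by
      simpa using ((hpiece j).elim
        (fun h => card_filter_ne_succ_lt_card_of_monotoneOn ((monotone_reg n c).comp_monotoneOn h))
        (fun h => card_filter_ne_succ_lt_card_of_antitoneOn ((monotone_reg n c).comp_antitoneOn h))).le
  calc #(changesOn (range N)) ≤ _ := card_le_card hcover
    _ ≤ #(univ : Finset (Fin (r + 1))) * (2 * n + 1) :=
      card_biUnion_le_card_mul _ _ _ fun j _ => hpiece_card j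
    _ = (r + 1) * (2 * n + 1) := by rw [card_univ, Fintype.card_fin]

theorem stmt_4 (n r N : ℕ) (c : Fin n → ℕ) (hc : Monotone c)
    (g : ℕ → ℤ)
    (hpieces : ∃ b : Fin (r + 2) → ℕ, b 0 = 0 ∧ b (Fin.last (r + 1)) = N ∧ Monotone b ∧
      ∀ j : Fin (r + 1),
        MonotoneOn g (Set.Icc (b j.castSucc) (b j.succ)) ∨
        AntitoneOn g (Set.Icc (b j.castSucc) (b j.succ))) :
    ((Finset.range N).filter
        (fun i => reg n c (g i) ≠ reg n c (g (i + 1)))).card ≤ (r + 1) * (2 * n + 1) :=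
  stmt_4_general n r N c g hpieces
end

section
/- If a system of linear Diophantine equations A x = b with x ≥ 0 has a solution in the naturals, where A is an m × d integer matrix and b an integer vector, with all entries of A and b bounded in absolute value by M, then it has a solution in which every coordinate of x is at most (d * M)^(2m+1) (some fixed exponential bound in m, d, and M). In particular, there is a constant c such that every solvable system has a solution with all entries at most 2^{(size of the system)^c}. -/
/-!
Take a solution `x` with minimal `N = ∑ j, x j` and list the columns of `A` with multiplicities
`x j`: these are `N` integer vectors summing to `b`. Shifted by `-b / N` they sum to zero, so by the
Steinitz lemma there is a chain of subfamilies, one of each size `k ∈ [m, N]`, whose sums all lie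
in the box `[-(2m+1)M, (2m+1)M]^m`. Once `N` exceeds `m` plus the number of lattice points of that
box, two members of the chain have the same sum, and their difference is a nonempty subfamily of
columns summing to zero; deleting it gives a smaller solution.

The Steinitz lemma is proved as by Grinberg and Sevastyanov: a set `B` is kept together with weights
`μ i ∈ [0, 1]` of total `#B - m` annihilating the family; rounding them to a vertex of the
polytope of such weights leaves at most `m + 1` fractional coordinates, which forces a zero weight
after rescaling the total to `#B - m - 1`, and that element can be dropped.
-/

open Finset Module Matrix

section Field

variable {𝕜 V ι : Type*} [Field 𝕜] [AddCommGroup V] [Module 𝕜 V]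

theorem exists_nontrivial_relation_sum_zero_of_finrank_succ_lt_card_on [FiniteDimensional 𝕜 V]
    [DecidableEq ι] (w : ι → V) {F : Finset ι} (h : finrank 𝕜 V + 1 < #F) :
    ∃ g : ι → 𝕜, (∀ i ∉ F, g i = 0) ∧ ∑ i ∈ F, g i • w i = 0 ∧ ∑ i ∈ F, g i = 0 ∧
      ∃ i ∈ F, g i ≠ 0 := by
  have hdep : ¬ LinearIndepOn 𝕜 (fun i => (w i, (1 : 𝕜))) (F : Set ι) := fun hli => by
    have := LinearIndependent.fintype_card_le_finrank hli
    simp only [coe_sort_coe, Fintype.card_coe, finrank_prod, finrank_self] at this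
    omega
  obtain ⟨g, hg, i, hi, hgi⟩ := not_linearIndepOn_finset_iff.1 hdep
  refine ⟨fun i => if i ∈ F then g i else 0, fun i hi => if_neg hi, ?_, ?_, i, hi, by simpa [hi]⟩
  · simpa [ite_smul, sum_ite_mem, Prod.fst_sum] using congrArg Prod.fst hg
  · simpa [sum_ite_mem, Prod.snd_sum] using congrArg Prod.snd hg

end Field

section OrderedField

variable {𝕜 V ι : Type*} [Field 𝕜] [LinearOrder 𝕜] [AddCommGroup V] [Module 𝕜 V]

structure IsBalancedWeight (w : ι → V) (B : Finset ι) (t : 𝕜) (μ : ι → 𝕜) : Prop where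
  mem_Icc : ∀ i ∈ B, μ i ∈ Set.Icc 0 1
  sum_eq : ∑ i ∈ B, μ i = t
  sum_smul_eq_zero : ∑ i ∈ B, μ i • w i = 0

def fracSupport (B : Finset ι) (μ : ι → 𝕜) : Finset ι := B.filter (μ · ∈ Set.Ioo 0 1)

variable {w : ι → V} {B : Finset ι} {t : 𝕜} {μ : ι → 𝕜}

theorem IsBalancedWeight.erase [DecidableEq ι] {i : ι} (hμ : IsBalancedWeight w B t μ)
    (hi : μ i = 0) :
    IsBalancedWeight w (B.erase i) t μ := by
  refine ⟨fun j hj => hμ.mem_Icc j (mem_of_mem_erase hj), ?_, ?_⟩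
  · rw [sum_erase _ hi, hμ.sum_eq]
  · rw [sum_erase _ (by rw [hi, zero_smul]), hμ.sum_smul_eq_zero]

variable [IsStrictOrderedRing 𝕜]

/-- The first time at which `a + s * g`, started inside `(0, 1)`, leaves it. -/
def exitTime (a g : 𝕜) : 𝕜 := max ((1 - a) / g) (-a / g)

theorem exitTime_spec {a g : 𝕜} (ha : a ∈ Set.Ioo 0 1) (hg : g ≠ 0) :
    0 < exitTime a g ∧ (∀ s, 0 ≤ s → s ≤ exitTime a g → a + s * g ∈ Set.Icc 0 1) ∧
      a + exitTime a g * g ∉ Set.Ioo 0 1 := by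
  obtain ⟨ha0, ha1⟩ := ha
  rcases hg.lt_or_gt with hg | hg
  · have hτ : exitTime a g = -a / g :=
      max_eq_right ((div_le_div_of_nonpos_of_le hg.le (by linarith)))
    rw [hτ, div_mul_cancel₀ _ hg.ne]
    refine ⟨div_pos_of_neg_of_neg (by linarith) hg, fun s hs0 hs => ?_, by simp⟩
    rw [le_div_iff_of_neg hg] at hs
    constructor <;> nlinarith
  · have hτ : exitTime a g = (1 - a) / g :=
      max_eq_left (div_le_div_of_nonneg_right (by linarith) hg.le)
    rw [hτ, div_mul_cancel₀ _ hg.ne']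
    refine ⟨div_pos (by linarith) hg, fun s hs0 hs => ?_, by simp⟩
    rw [le_div_iff₀ hg] at hs
    constructor <;> nlinarith

theorem exists_add_mul_mem_Icc_and_not_mem_Ioo {F : Finset ι} {a g : ι → 𝕜}
    (ha : ∀ i ∈ F, a i ∈ Set.Ioo 0 1) (hg : ∃ i ∈ F, g i ≠ 0) :
    ∃ s, (∀ i ∈ F, a i + s * g i ∈ Set.Icc 0 1) ∧ ∃ i ∈ F, a i + s * g i ∉ Set.Ioo 0 1 := by
  classical
  obtain ⟨i₀, hi₀, hmin⟩ := (F.filter (g · ≠ 0)).exists_min_image (fun i => exitTime (a i) (g i))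
    (by simpa [Finset.Nonempty] using hg)
  rw [mem_filter] at hi₀
  obtain ⟨hpos, -, hexit⟩ := exitTime_spec (ha i₀ hi₀.1) hi₀.2
  refine ⟨exitTime (a i₀) (g i₀), fun i hi => ?_, i₀, hi₀.1, hexit⟩
  by_cases hgi : g i = 0
  · simpa [hgi] using Set.Ioo_subset_Icc_self (ha i hi)
  · exact (exitTime_spec (ha i hi) hgi).2.1 _ hpos.le (hmin i (mem_filter.2 ⟨hi, hgi⟩))

theorem IsBalancedWeight.exists_card_fracSupport_le [DecidableEq ι] [FiniteDimensional 𝕜 V]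
    (hμ : IsBalancedWeight w B t μ) :
    ∃ ν, IsBalancedWeight w B t ν ∧ #(fracSupport B ν) ≤ finrank 𝕜 V + 1 := by
  induction hn : #(fracSupport B μ) using Nat.strong_induction_on generalizing μ with
  | _ n ih =>
  by_cases hsmall : n ≤ finrank 𝕜 V + 1
  · exact ⟨μ, hμ, hn ▸ hsmall⟩
  set F := fracSupport B μ
  have hFB : F ⊆ B := filter_subset _ _
  obtain ⟨g, hgF, hgw, hgsum, hg⟩ :=
    exists_nontrivial_relation_sum_zero_of_finrank_succ_lt_card_on (𝕜 := 𝕜) w (F := F) (by omega)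
  obtain ⟨s, hsF, i₀, hi₀, hexit⟩ :=
    exists_add_mul_mem_Icc_and_not_mem_Ioo (fun i hi => (mem_filter.1 hi).2) hg
  have hgB : ∑ i ∈ B, g i = 0 := (sum_subset hFB fun i _ hi => hgF i hi).symm.trans hgsum
  have hgwB : ∑ i ∈ B, g i • w i = 0 :=
    (sum_subset hFB fun i _ hi => by simp [hgF i hi]).symm.trans hgw
  have hν : IsBalancedWeight w B t (fun i => μ i + s * g i) := by
    refine ⟨fun i hi => ?_, ?_, ?_⟩
    · by_cases hiF : i ∈ F
      · exact hsF i hiF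
      · simpa [hgF i hiF] using hμ.mem_Icc i hi
    · rw [sum_add_distrib, ← mul_sum, hgB, hμ.sum_eq, mul_zero, add_zero]
    · simp_rw [add_smul, sum_add_distrib, mul_smul, ← smul_sum]
      rw [hgwB, hμ.sum_smul_eq_zero, smul_zero, add_zero]
  have hlt : fracSupport B (fun i => μ i + s * g i) ⊂ F := by
    refine ssubset_iff_of_subset (fun i hi => ?_) |>.2 ⟨i₀, hi₀, fun h => hexit (mem_filter.1 h).2⟩
    by_contra hiF
    rw [fracSupport, mem_filter, hgF i hiF, mul_zero, add_zero] at hi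
    exact hiF (mem_filter.2 hi)
  exact ih _ (hn ▸ card_lt_card hlt) hν rfl

theorem IsBalancedWeight.mul {r : 𝕜} (hμ : IsBalancedWeight w B t μ) (hr : r ∈ Set.Icc 0 1) :
    IsBalancedWeight w B (r * t) (fun i => r * μ i) := by
  refine ⟨fun i hi => ?_, by rw [← mul_sum, hμ.sum_eq], ?_⟩
  · obtain ⟨h0, h1⟩ := hμ.mem_Icc i hi
    exact ⟨mul_nonneg hr.1 h0, mul_le_one₀ hr.2 h0 h1⟩
  · simp_rw [mul_smul, ← smul_sum, hμ.sum_smul_eq_zero, smul_zero]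

theorem isBalancedWeight_univ [Fintype ι] (hw : ∑ i, w i = 0) {m : ℕ}
    (hm : m ≤ Fintype.card ι) :
    IsBalancedWeight w univ ((#(univ : Finset ι) : 𝕜) - m)
      (fun _ => ((Fintype.card ι : 𝕜) - m) / Fintype.card ι) := by
  have hm' : (m : 𝕜) ≤ Fintype.card ι := by exact_mod_cast hm
  refine ⟨fun i _ => ⟨div_nonneg (by linarith) (by positivity), div_le_one_of_le₀ (by linarith)
    (by positivity)⟩, ?_, by rw [← smul_sum, hw, smul_zero]⟩
  rw [sum_const, card_univ, nsmul_eq_mul]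
  rcases eq_or_ne (Fintype.card ι : 𝕜) 0 with h | h
  · rw [h] at hm' ⊢
    linarith [(Nat.cast_nonneg m : (0 : 𝕜) ≤ m)]
  · exact mul_div_cancel₀ _ h

theorem IsBalancedWeight.exists_eq_zero {k : ℕ}
    (hμ : IsBalancedWeight w B ((#B : 𝕜) - (k + 1)) μ) (hk : #(fracSupport B μ) ≤ k + 1) :
    ∃ i ∈ B, μ i = 0 := by
  -- The `1 - μ i` add up to `k + 1`, but only fractional coordinates contribute, each less than `1`.
  by_contra! hpos
  set F := fracSupport B μ
  have hcompl : ∑ i ∈ B, (1 - μ i) = k + 1 := by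
    rw [sum_sub_distrib, hμ.sum_eq, sum_const, nsmul_one]; ring
  have hF : ∑ i ∈ B, (1 - μ i) = ∑ i ∈ F, (1 - μ i) := by
    refine (sum_subset (filter_subset _ _) fun i hiB hiF => ?_).symm
    have h1 : μ i = 1 := by
      by_contra h1
      exact hiF (mem_filter.2 ⟨hiB, lt_of_le_of_ne (hμ.mem_Icc i hiB).1 (hpos i hiB).symm,
        lt_of_le_of_ne (hμ.mem_Icc i hiB).2 h1⟩)
    rw [h1, sub_self]
  rcases F.eq_empty_or_nonempty with hempty | hne
  · rw [hF, hempty, sum_empty] at hcompl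
    linarith
  · have : ∑ i ∈ F, (1 - μ i) < ∑ i ∈ F, (1 : 𝕜) :=
      sum_lt_sum_of_nonempty hne fun i hi => by linarith [(mem_filter.1 hi).2.1]
    rw [sum_const, nsmul_one] at this
    have hk' : (#F : 𝕜) ≤ k + 1 := by exact_mod_cast hk
    linarith

theorem IsBalancedWeight.exists_erase [DecidableEq ι] [FiniteDimensional 𝕜 V]
    (hμ : IsBalancedWeight w B ((#B : 𝕜) - finrank 𝕜 V) μ) (hB : finrank 𝕜 V < #B) :
    ∃ i ∈ B, ∃ ν, IsBalancedWeight w (B.erase i) ((#(B.erase i) : 𝕜) - finrank 𝕜 V) ν := by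
  set c : 𝕜 := #B - finrank 𝕜 V
  have hc : 1 ≤ c := by
    have : (finrank 𝕜 V : 𝕜) + 1 ≤ #B := by exact_mod_cast hB
    linarith
  have hr : (c - 1) / c ∈ Set.Icc 0 1 :=
    ⟨div_nonneg (by linarith) (by linarith), div_le_one_of_le₀ (by linarith) (by linarith)⟩
  have hscaled := hμ.mul hr
  rw [div_mul_cancel₀ _ (by linarith), show c - 1 = (#B : 𝕜) - (finrank 𝕜 V + 1) by ring] at hscaled
  obtain ⟨ν, hν, hfrac⟩ := hscaled.exists_card_fracSupport_le
  obtain ⟨i, hi, hνi⟩ := hν.exists_eq_zero hfrac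
  refine ⟨i, hi, ν, ?_⟩
  rw [card_erase_of_mem hi, Nat.cast_sub (by omega)]
  convert hν.erase hνi using 1
  push_cast; ring

end OrderedField

theorem Finset.exists_monotoneOn_chain {ι : Type*} [DecidableEq ι] {P : Finset ι → Prop} {m : ℕ}
    (hP : ∀ B, P B → m < #B → ∃ i ∈ B, P (B.erase i)) {B : Finset ι} (hB : P B) :
    ∃ A : ℕ → Finset ι, MonotoneOn A (Set.Icc m #B) ∧
      ∀ k ∈ Set.Icc m #B, A k ⊆ B ∧ #(A k) = k ∧ P (A k) := by
  induction hn : #B generalizing B with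
  | zero =>
    refine ⟨fun _ => B, monotoneOn_const, fun k hk => ?_⟩
    obtain rfl : k = 0 := by simp_all
    exact ⟨subset_rfl, hn, hB⟩
  | succ n ih =>
  by_cases hm : m < #B
  · obtain ⟨i, hi, hPi⟩ := hP B hB hm
    obtain ⟨A, hmono, hA⟩ := ih hPi (by rw [card_erase_of_mem hi]; omega)
    have hAB {k} (hk : k ∈ Set.Icc m n) : A k ⊆ B := (hA k hk).1.trans (erase_subset i B)
    refine ⟨fun k => if k ≤ n then A k else B, fun k hk l hl hkl => ?_, fun k hk => ?_⟩
    · simp only [Set.mem_Icc] at hk hl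
      by_cases hln : l ≤ n
      · simp only [if_pos hln, if_pos (hkl.trans hln)]
        exact hmono ⟨hk.1, hkl.trans hln⟩ ⟨hl.1, hln⟩ hkl
      · simp only [if_neg hln]
        split_ifs with hkn
        exacts [hAB ⟨hk.1, hkn⟩, subset_rfl]
    · simp only [Set.mem_Icc] at hk
      by_cases hkn : k ≤ n
      · simp only [if_pos hkn]
        exact ⟨hAB ⟨hk.1, hkn⟩, (hA k ⟨hk.1, hkn⟩).2⟩
      · simp only [if_neg hkn]
        exact ⟨subset_rfl, by omega, hB⟩
  · refine ⟨fun _ => B, monotoneOn_const, fun k hk => ?_⟩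
    obtain rfl : k = n + 1 := by simp only [Set.mem_Icc] at hk; omega
    exact ⟨subset_rfl, hn, hB⟩

section Normed

variable {ι V : Type*} [NormedAddCommGroup V] [NormedSpace ℝ V]

theorem IsBalancedWeight.norm_sum_le {w : ι → V} {B : Finset ι} {μ : ι → ℝ} {m : ℕ} {C : ℝ}
    (hμ : IsBalancedWeight w B ((#B : ℝ) - m) μ) (hw : ∀ i ∈ B, ‖w i‖ ≤ C) :
    ‖∑ i ∈ B, w i‖ ≤ m * C := by
  have hsum : ∑ i ∈ B, w i = ∑ i ∈ B, (1 - μ i) • w i := by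
    simp_rw [sub_smul, one_smul, sum_sub_distrib, hμ.sum_smul_eq_zero, sub_zero]
  calc ‖∑ i ∈ B, w i‖ ≤ ∑ i ∈ B, ‖(1 - μ i) • w i‖ := hsum ▸ _root_.norm_sum_le _ _
    _ ≤ ∑ i ∈ B, (1 - μ i) * C := sum_le_sum fun i hi => by
        rw [norm_smul, Real.norm_of_nonneg (sub_nonneg.2 (hμ.mem_Icc i hi).2)]
        exact mul_le_mul_of_nonneg_left (hw i hi) (sub_nonneg.2 (hμ.mem_Icc i hi).2)
    _ = m * C := by
        rw [← sum_mul, sum_sub_distrib, hμ.sum_eq, sum_const, nsmul_one]; ring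

theorem exists_monotoneOn_chain_norm_sum_le [Fintype ι] [DecidableEq ι] [FiniteDimensional ℝ V]
    {w : ι → V} (hw0 : ∑ i, w i = 0) {C : ℝ} (hw : ∀ i, ‖w i‖ ≤ C) :
    ∃ A : ℕ → Finset ι, MonotoneOn A (Set.Icc (finrank ℝ V) (Fintype.card ι)) ∧
      ∀ k ∈ Set.Icc (finrank ℝ V) (Fintype.card ι),
        #(A k) = k ∧ ‖∑ i ∈ A k, w i‖ ≤ finrank ℝ V * C := by
  by_cases hm : finrank ℝ V ≤ Fintype.card ι
  · obtain ⟨A, hmono, hA⟩ := exists_monotoneOn_chain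
      (P := fun B => ∃ μ, IsBalancedWeight w B ((#B : ℝ) - finrank ℝ V) μ)
      (fun B ⟨μ, hμ⟩ hB => hμ.exists_erase hB) ⟨_, isBalancedWeight_univ hw0 hm⟩
    rw [card_univ] at hmono hA
    refine ⟨A, hmono, fun k hk => ?_⟩
    obtain ⟨-, hcard, μ, hμ⟩ := hA k hk
    exact ⟨hcard, hμ.norm_sum_le fun i _ => hw i⟩
  · exact ⟨fun _ => ∅, fun k hk => by have := hk.1.trans hk.2; omega,
      fun k hk => by have := hk.1.trans hk.2; omega⟩

end Normed

theorem abs_natCast_mul_div_natCast_le {k N : ℕ} {x C : ℝ} (hk : k ≤ N) (hx : |x| ≤ C) :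
    |k * (x / N)| ≤ C :=
  calc |k * (x / N)| = k / N * |x| := by rw [abs_mul, abs_div, Nat.abs_cast, Nat.abs_cast]; ring
    _ ≤ 1 * C := mul_le_mul (div_le_one_of_le₀ (by exact_mod_cast hk) (Nat.cast_nonneg _)) hx
        (abs_nonneg _) zero_le_one
    _ = C := one_mul C

section IntegerVectors

variable {ι : Type*} [Fintype ι] [DecidableEq ι] {m M : ℕ}

theorem exists_monotoneOn_chain_abs_sum_le {v : ι → Fin m → ℤ} {b : Fin m → ℤ}
    (hv : ∀ i r, |v i r| ≤ M) (hb : ∀ r, |b r| ≤ M) (hvb : ∑ i, v i = b) :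
    ∃ A : ℕ → Finset ι, MonotoneOn A (Set.Icc m (Fintype.card ι)) ∧
      ∀ k ∈ Set.Icc m (Fintype.card ι), #(A k) = k ∧ ∀ r, |∑ i ∈ A k, v i r| ≤ (2 * m + 1) * M := by
  set N := Fintype.card ι
  have hvb' (r : Fin m) : ∑ i, (v i r : ℝ) = b r := by
    exact_mod_cast (sum_apply r univ v).symm.trans (congrFun hvb r)
  have hdrift (r : Fin m) : (N : ℝ) * (b r / N) = b r := by
    rcases eq_or_ne (N : ℝ) 0 with hN | hN
    · have : IsEmpty ι := Fintype.card_eq_zero_iff.1 (by exact_mod_cast hN)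
      rw [hN, zero_mul, ← hvb' r, univ_eq_empty, sum_empty]
    · exact mul_div_cancel₀ _ hN
  have hbN {k : ℕ} (hk : k ≤ N) (r : Fin m) : |k * ((b r : ℝ) / N)| ≤ M :=
    abs_natCast_mul_div_natCast_le hk (by exact_mod_cast hb r)
  let w : ι → Fin m → ℝ := fun i r => v i r - b r / N
  have hw0 : ∑ i, w i = 0 := by
    ext r
    simp only [w, Finset.sum_apply, sum_sub_distrib, hvb' r, sum_const, card_univ, nsmul_eq_mul,
      Pi.zero_apply]
    exact sub_eq_zero.2 (hdrift r).symm
  have hw (i : ι) : ‖w i‖ ≤ 2 * M := by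
    refine (pi_norm_le_iff_of_nonneg (by positivity)).2 fun r => ?_
    have hv' : |(v i r : ℝ)| ≤ M := by exact_mod_cast hv i r
    have := hbN (Fintype.card_pos_iff.2 ⟨i⟩) r
    rw [Nat.cast_one, one_mul] at this
    rw [Real.norm_eq_abs]
    linarith [abs_sub (v i r : ℝ) (b r / N)]
  obtain ⟨A, hmono, hA⟩ := exists_monotoneOn_chain_norm_sum_le hw0 hw
  rw [finrank_fin_fun] at hmono hA
  refine ⟨A, hmono, fun k hk => ⟨(hA k hk).1, fun r => ?_⟩⟩
  have hsplit : (∑ i ∈ A k, v i r : ℝ) = (∑ i ∈ A k, w i) r + k * (b r / N) := by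
    simp only [w, Finset.sum_apply, sum_sub_distrib, sum_const, (hA k hk).1, nsmul_eq_mul]; ring
  have hwk : |(∑ i ∈ A k, w i) r| ≤ m * (2 * M) :=
    (norm_le_pi_norm _ r).trans (hA k hk).2
  have : |(∑ i ∈ A k, v i r : ℝ)| ≤ (2 * m + 1) * M := by
    rw [hsplit]
    linarith [abs_add_le ((∑ i ∈ A k, w i) r) (k * (b r / N)), hbN hk.2 r]
  exact_mod_cast this

theorem exists_lt_eq_of_abs_le {c a n : ℕ} {s : ℕ → Fin m → ℤ}
    (hs : ∀ k ∈ Set.Icc a n, ∀ r, |s k r| ≤ c) (hcard : (2 * c + 1) ^ m + a < n + 1) :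
    ∃ k ∈ Set.Icc a n, ∃ l ∈ Set.Icc a n, k < l ∧ s k = s l := by
  set box := Fintype.piFinset fun _ : Fin m => Icc (-(c : ℤ)) c
  have hbox : #box = (2 * c + 1) ^ m := by
    simp only [box, Fintype.card_piFinset, Int.card_Icc, prod_const, card_univ, Fintype.card_fin]
    congr
    omega
  have hmaps : Set.MapsTo s (Icc a n) box := fun k hk =>
    Fintype.mem_piFinset.2 fun r => mem_Icc.2 (abs_le.1 (hs k (by simpa using hk) r))
  obtain ⟨k, hk, l, hl, hne, heq⟩ := exists_ne_map_eq_of_card_lt_of_maps_to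
    (by rw [hbox, Nat.card_Icc]; omega) hmaps
  rw [mem_Icc, ← Set.mem_Icc] at hk hl
  rcases hne.lt_or_gt with h | h
  exacts [⟨k, hk, l, hl, h, heq⟩, ⟨l, hl, k, hk, h, heq.symm⟩]

theorem exists_nonempty_sum_eq_zero {v : ι → Fin m → ℤ} {b : Fin m → ℤ}
    (hv : ∀ i r, |v i r| ≤ M) (hb : ∀ r, |b r| ≤ M) (hvb : ∑ i, v i = b)
    (hcard : (2 * ((2 * m + 1) * M) + 1) ^ m + m < Fintype.card ι) :
    ∃ S : Finset ι, S.Nonempty ∧ ∑ i ∈ S, v i = 0 := by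
  obtain ⟨A, hmono, hA⟩ := exists_monotoneOn_chain_abs_sum_le hv hb hvb
  obtain ⟨k, hk, l, hl, hkl, heq⟩ := exists_lt_eq_of_abs_le (s := fun k => ∑ i ∈ A k, v i)
    (fun k hk r => by rw [Finset.sum_apply]; exact_mod_cast (hA k hk).2 r) (Nat.lt_succ_of_lt hcard)
  have hsub : A k ⊆ A l := hmono hk hl hkl.le
  refine ⟨A l \ A k, ?_, ?_⟩
  · rw [← card_pos, card_sdiff_of_subset hsub, (hA k hk).1, (hA l hl).1]
    omega
  · rw [← add_right_cancel_iff (a := ∑ i ∈ A k, v i), sum_sdiff hsub, zero_add]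
    exact heq.symm

end IntegerVectors

theorem Finset.sum_sigma_fst_eq_sum_card_smul {α M : Type*} [Fintype α] [DecidableEq α]
    [AddCommMonoid M] {β : α → Type*} (S : Finset (Σ a, β a)) (f : α → M) :
    ∑ p ∈ S, f p.1 = ∑ a, #(S.preimage (Sigma.mk a) sigma_mk_injective.injOn) • f a := by
  conv_lhs => rw [← sigma_preimage_mk_of_subset S (subset_univ _)]
  simp only [sum_sigma, sum_const]

theorem Matrix.mulVec_natCast_eq_sum {R : Type*} [CommSemiring R] {m d : ℕ}
    (A : Matrix (Fin m) (Fin d) R) (y : Fin d → ℕ) :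
    A *ᵥ (fun j => (y j : R)) = ∑ j, y j • Aᵀ j := by
  simp only [mulVec_eq_sum, op_smul_eq_smul, Nat.cast_smul_eq_nsmul]

theorem eisenbrandWeismantel_bound_le (d m M : ℕ) :
    (2 * ((2 * m + 1) * M) + 1) ^ m + m ≤ (d + m + 2) ^ (2 * m + 2) * (M + 1) ^ (2 * m + 2) := by
  have hQ : ((m + 2) * (M + 1)) ^ 2 ≤ ((d + m + 2) * (M + 1)) ^ 2 :=
    Nat.pow_le_pow_left (Nat.mul_le_mul_right _ (by omega)) 2
  have hβ : 2 * ((2 * m + 1) * M) + 1 ≤ ((d + m + 2) * (M + 1)) ^ 2 :=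
    le_trans (by ring_nf; nlinarith) hQ
  have hm : m + 1 ≤ ((d + m + 2) * (M + 1)) ^ 2 := le_trans (by ring_nf; nlinarith) hQ
  rw [← mul_pow, show 2 * m + 2 = 2 * (m + 1) by ring, pow_mul]
  generalize ((d + m + 2) * (M + 1)) ^ 2 = Q at hβ hm ⊢
  calc (2 * ((2 * m + 1) * M) + 1) ^ m + m ≤ Q ^ m + m * Q ^ m :=
        add_le_add (Nat.pow_le_pow_left hβ m) (Nat.le_mul_of_pos_right m (pow_pos (by omega) m))
    _ = Q ^ m * (m + 1) := by ring
    _ ≤ Q ^ m * Q := Nat.mul_le_mul_left _ hm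
    _ = Q ^ (m + 1) := (pow_succ Q m).symm

namespace Matrix

variable {m d M : ℕ} {A : Matrix (Fin m) (Fin d) ℤ} {b : Fin m → ℤ}

theorem exists_le_mulVec_eq_zero (hA : ∀ i j, |A i j| ≤ M) (hb : ∀ i, |b i| ≤ M)
    {x : Fin d → ℕ} (hx : A *ᵥ (fun j => (x j : ℤ)) = b)
    (hbig : (2 * ((2 * m + 1) * M) + 1) ^ m + m < ∑ j, x j) :
    ∃ y : Fin d → ℕ, y ≤ x ∧ 0 < ∑ j, y j ∧ A *ᵥ (fun j => (y j : ℤ)) = 0 := by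
  let column : (Σ j, Fin (x j)) → Fin m → ℤ := fun p => Aᵀ p.1
  have hcolumn : ∑ p, column p = b := by
    rw [← hx, mulVec_natCast_eq_sum]
    simpa using sum_sigma_fst_eq_sum_card_smul (univ : Finset (Σ j, Fin (x j))) fun j => Aᵀ j
  obtain ⟨S, hS, hS0⟩ := exists_nonempty_sum_eq_zero (v := column) (fun p r => hA r p.1) hb hcolumn
    (by simpa using hbig)
  set y : Fin d → ℕ := fun j => #(S.preimage (Sigma.mk j) sigma_mk_injective.injOn)
  refine ⟨y, fun j => ?_, ?_, ?_⟩
  · simpa using card_le_univ (S.preimage (Sigma.mk j) sigma_mk_injective.injOn)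
  · have := sum_sigma_fst_eq_sum_card_smul S (fun _ => 1)
    simp only [sum_const, smul_eq_mul, mul_one] at this
    rw [← this]
    exact hS.card_pos
  · rw [mulVec_natCast_eq_sum]
    exact (sum_sigma_fst_eq_sum_card_smul S fun j => Aᵀ j).symm.trans hS0

theorem exists_mulVec_eq_sum_le (hA : ∀ i j, |A i j| ≤ M) (hb : ∀ i, |b i| ≤ M)
    {x : Fin d → ℕ} (hx : A *ᵥ (fun j => (x j : ℤ)) = b) :
    ∃ x : Fin d → ℕ, A *ᵥ (fun j => (x j : ℤ)) = b ∧
      ∑ j, x j ≤ (2 * ((2 * m + 1) * M) + 1) ^ m + m := by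
  induction hn : ∑ j, x j using Nat.strong_induction_on generalizing x with
  | _ n ih =>
  by_cases hsmall : n ≤ (2 * ((2 * m + 1) * M) + 1) ^ m + m
  · exact ⟨x, hx, hn ▸ hsmall⟩
  obtain ⟨y, hyx, hy, hAy⟩ := exists_le_mulVec_eq_zero hA hb hx (by omega)
  refine ih (∑ j, (x j - y j)) ?_ (x := x - y) ?_ rfl
  · rw [← hn, sum_tsub_distrib _ fun j _ => hyx j]
    omega
  · have hcast : (fun j => ((x - y) j : ℤ)) = (fun j => (x j : ℤ)) - fun j => (y j : ℤ) :=
      funext fun j => Nat.cast_sub (hyx j)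
    rw [hcast, mulVec_sub, hx, hAy, sub_zero]

end Matrix

/-- Small solutions of integer programs (Papadimitriou 1981): a solvable system
`A x = b`, `x ≥ 0`, with entries bounded by `M`, has a solution whose entries are
bounded by an explicit exponential. -/
theorem stmt_9 (m d : ℕ) (M : ℕ) (A : Matrix (Fin m) (Fin d) ℤ) (b : Fin m → ℤ)
    (hA : ∀ i j, |A i j| ≤ (M : ℤ)) (hb : ∀ i, |b i| ≤ (M : ℤ))
    (hsol : ∃ x : Fin d → ℕ, A.mulVec (fun j => (x j : ℤ)) = b) :
    ∃ x : Fin d → ℕ, A.mulVec (fun j => (x j : ℤ)) = b ∧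
      ∀ j, x j ≤ (d + m + 2) ^ (2 * m + 2) * (M + 1) ^ (2 * m + 2) := by
  obtain ⟨x₀, hx₀⟩ := hsol
  obtain ⟨x, hx, hsum⟩ := exists_mulVec_eq_sum_le hA hb hx₀
  refine ⟨x, hx, fun j => ?_⟩
  calc x j ≤ ∑ j, x j := single_le_sum (fun j _ => Nat.zero_le (x j)) (mem_univ j)
    _ ≤ (2 * ((2 * m + 1) * M) + 1) ^ m + m := hsum
    _ ≤ _ := eisenbrandWeismantel_bound_le d m M
end

section
/- Correctness of the partitioning fold: for a list a of integers and a position p < a.length, the fold that skips while (index < p and element ≤ a[p]) or (index ≥ p and element ≥ a[p]) processes the entire list (returns index = a.length) if and only if every element before position p is at most a[p] and every element at or after position p is at least a[p]. -/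
theorem stmt_14 (a : List ℤ) (p : ℕ) (hp : p < a.length) :
    ((List.range a.length).takeWhile
        (fun i => decide ((i < p ∧ a.getD i 0 ≤ a.getD p 0) ∨
          (p ≤ i ∧ a.getD p 0 ≤ a.getD i 0)))).length = a.length ↔
      (∀ i < p, a.getD i 0 ≤ a.getD p 0) ∧
        (∀ i, p ≤ i → i < a.length → a.getD p 0 ≤ a.getD i 0) := by
  have hpre := List.takeWhile_prefix (l := List.range a.length)
    (p := fun i => decide ((i < p ∧ a.getD i 0 ≤ a.getD p 0) ∨
          (p ≤ i ∧ a.getD p 0 ≤ a.getD i 0)))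
  constructor
  · intro h
    have heq := hpre.eq_of_length (by simpa using h)
    rw [List.takeWhile_eq_self_iff] at heq
    constructor
    · intro i hi
      have := heq i (by simp; omega)
      rw [decide_eq_true_eq] at this
      rcases this with ⟨_, h⟩ | ⟨h, _⟩ <;> omega
    · intro i hpi hi
      have := heq i (by simpa using hi)
      rw [decide_eq_true_eq] at this
      rcases this with ⟨h, _⟩ | ⟨_, h⟩ <;> omega
  · rintro ⟨h1, h2⟩
    rw [List.takeWhile_eq_self_iff.mpr ?_, List.length_range]
    intro i hi
    rw [List.mem_range] at hi
    rw [decide_eq_true_eq]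
    rcases lt_or_ge i p with h | h
    · exact Or.inl ⟨h, h1 i h⟩
    · exact Or.inr ⟨h, h2 i h hi⟩
end

section
/- Pumping a cycle: if a sequence of transitions of a counter machine contains a cycle with net counter effect v, then for every j ≥ 0 the sequence obtained by repeating the cycle j times (in place) is state-consistent with the same start and end states, and its net effect equals the original net effect plus (j − 1) · v. -/
/-!
A state-consistent nonempty transition sequence is a walk from the source of its first transition
to the target of its last one, and walks compose under concatenation. Splitting the given walk
along `l₁ ++ cyc ++ l₂`, the cycle condition forces `cyc` to be a walk from some state `p` back
to `p`; hence so is any number of copies of it, and these can be spliced back between `l₁` and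
`l₂` without changing the endpoints. The net effect is additive, so `j` copies contribute `j • v`.
-/

inductive IsWalk {α β : Type*} (src tgt : α → β) : β → List α → β → Prop
  | nil (a : β) : IsWalk src tgt a [] a
  | cons {x : α} {l : List α} {b : β} :
      IsWalk src tgt (tgt x) l b → IsWalk src tgt (src x) (x :: l) b

namespace IsWalk

open List

variable {α β : Type*} {src tgt : α → β} {a b c : β} {l m : List α}

theorem append (hl : IsWalk src tgt a l b) (hm : IsWalk src tgt b m c) :
    IsWalk src tgt a (l ++ m) c := by
  induction hl with
  | nil => exact hm
  | cons _ ih => exact .cons (ih hm)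

theorem of_append (h : IsWalk src tgt a (l ++ m) c) :
    ∃ b, IsWalk src tgt a l b ∧ IsWalk src tgt b m c := by
  induction l generalizing a with
  | nil => exact ⟨a, .nil a, h⟩
  | cons x l ih =>
    cases h with
    | cons h =>
      obtain ⟨b, hl, hm⟩ := ih h
      exact ⟨b, .cons hl, hm⟩

theorem flatten_replicate (h : IsWalk src tgt a l a) (j : ℕ) :
    IsWalk src tgt a (replicate j l).flatten a := by
  induction j with
  | zero => exact .nil a
  | succ j ih => exact h.append ih

theorem eq_of_nil (h : IsWalk src tgt a [] b) : a = b := by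
  cases h; rfl

theorem src_head (h : IsWalk src tgt a l b) (hl : l ≠ []) : src (l.head hl) = a := by
  cases h with
  | nil => contradiction
  | cons => rfl

theorem tgt_getLast (h : IsWalk src tgt a l b) (hl : l ≠ []) : tgt (l.getLast hl) = b := by
  induction h with
  | nil => contradiction
  | @cons x l b h ih =>
    rcases eq_or_ne l [] with rfl | hl'
    · exact h.eq_of_nil
    · rw [getLast_cons hl', ih hl']

theorem isChain (h : IsWalk src tgt a l b) : l.IsChain (fun x y => tgt x = src y) := by
  induction h with
  | nil => exact .nil
  | cons h ih =>
    refine ih.cons fun y hy => ?_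
    obtain ⟨l, rfl⟩ := head?_eq_some_iff.mp hy
    exact (h.src_head (cons_ne_nil y l)).symm

theorem of_isChain (h : l.IsChain (fun x y => tgt x = src y)) (hl : l ≠ []) :
    IsWalk src tgt (src (l.head hl)) l (tgt (l.getLast hl)) := by
  induction l with
  | nil => contradiction
  | cons x l ih =>
    rcases eq_or_ne l [] with rfl | hl'
    · exact .cons (.nil _)
    · obtain ⟨hx, hchain⟩ := isChain_cons.mp h
      have hwalk := ih hchain hl'
      rw [← hx _ (head?_eq_some_head hl')] at hwalk
      rw [getLast_cons hl']
      exact .cons hwalk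

end IsWalk

/-- Pumping a cycle: repeating a cycle `j` times in place keeps the transition
sequence state-consistent, preserves the start and end states, and adds
`(j - 1) • v` to the net counter effect, where `v` is the cycle's net effect. -/
theorem stmt_17 {Q : Type*} {k : ℕ}
    (l₁ cyc l₂ : List (Q × Q × (Fin k → ℤ))) (hne : cyc ≠ []) (j : ℕ)
    (hcons : (l₁ ++ cyc ++ l₂).Chain' (fun s t => s.2.1 = t.1))
    (hcyc : (cyc.getLast hne).2.1 = (cyc.head hne).1) :
    (l₁ ++ (List.replicate j cyc).flatten ++ l₂).Chain' (fun s t => s.2.1 = t.1) ∧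
      (l₁ ++ (List.replicate j cyc).flatten ++ l₂ ≠ [] →
        Option.map Prod.fst (l₁ ++ (List.replicate j cyc).flatten ++ l₂).head? =
          Option.map Prod.fst (l₁ ++ cyc ++ l₂).head? ∧
        Option.map (fun t => t.2.1) (l₁ ++ (List.replicate j cyc).flatten ++ l₂).getLast? =
          Option.map (fun t => t.2.1) (l₁ ++ cyc ++ l₂).getLast?) ∧
      ((l₁ ++ (List.replicate j cyc).flatten ++ l₂).map (fun t => t.2.2)).sum =
        ((l₁ ++ cyc ++ l₂).map (fun t => t.2.2)).sum +
          ((j : ℤ) - 1) • (cyc.map (fun t => t.2.2)).sum := by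
  have hL : l₁ ++ cyc ++ l₂ ≠ [] := by simp [hne]
  have hw := IsWalk.of_isChain hcons hL
  obtain ⟨q, hw₁₂, hw₃⟩ := hw.of_append
  obtain ⟨p, hw₁, hw₂⟩ := hw₁₂.of_append
  obtain rfl : p = q := by rw [← hw₂.src_head hne, ← hw₂.tgt_getLast hne, hcyc]
  have hw' := (hw₁.append (hw₂.flatten_replicate j)).append hw₃
  refine ⟨hw'.isChain, fun hL' => ?_, ?_⟩
  · rw [List.head?_eq_some_head hL, List.head?_eq_some_head hL', List.getLast?_eq_some_getLast hL,
      List.getLast?_eq_some_getLast hL']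
    simp only [Option.map_some, hw'.src_head, hw'.tgt_getLast, and_self]
  · simp only [List.map_append, List.sum_append, List.map_flatten, List.map_replicate,
      List.sum_flatten, List.sum_replicate]
    rw [sub_smul, one_smul, natCast_zsmul]
    abel
end
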